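/- Fix an integer ℓ ≥ 1 and suppose K_ℓ < p/(4κ). Then β = (13/8)p − K_ℓ(κ − δ_{2ℓ}) > 0, where δ_{2ℓ} = sin(4πℓκ)/(2πℓ). (β is the coefficient of the cubic term in the reduced equation on the center manifold at the bifurcation point K = K_ℓ, and its positivity makes the bifurcation supercritical.) -/
import Mathlib


open Real Set

noncomputable section

/-- The critical coupling `K_j = πjp / (2(2πjκ - sin(2πjκ)))`. -/
def Kc (p κ : ℝ) (j : ℕ) : ℝ :=
  π * j * p / (2 * (2 * π * j * κ - Real.sin (2 * π * j * κ)))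

/-- If `K_ℓ < p/(4κ)`, then the cubic coefficient `β = (13/8)p - K_ℓ(κ - δ_{2ℓ})` of the reduced
equation on the center manifold is positive, where `δ_{2ℓ} = sin(4πℓκ)/(2πℓ)`. -/
theorem beta_positive
    (κ p : ℝ) (hκ : κ ∈ Set.Ioo (0:ℝ) (1/2)) (hp : 0 < p)
    (ℓ : ℕ) (hℓ : 1 ≤ ℓ) (h : Kc p κ ℓ < p / (4 * κ)) :
    0 < (13/8) * p - Kc p κ ℓ * (κ - Real.sin (4 * π * ℓ * κ) / (2 * π * ℓ)) := by
  obtain ⟨hκ0, hκ2⟩ := hκ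
  have hℓ' : (1:ℝ) ≤ (ℓ : ℝ) := by exact_mod_cast hℓ
  have hℓpos : (0:ℝ) < (ℓ : ℝ) := by linarith
  have hπ := Real.pi_gt_three
  have hx : 0 < 2 * π * ℓ * κ := by positivity
  have hsin : Real.sin (2 * π * ℓ * κ) < 2 * π * ℓ * κ := Real.sin_lt hx
  have hK : 0 < Kc p κ ℓ := by
    unfold Kc
    apply div_pos (by positivity)
    linarith
  have hy : (0:ℝ) ≤ 4 * π * ℓ * κ := by positivity
  have h4 : -(4 * π * ℓ * κ) ≤ Real.sin (4 * π * ℓ * κ) := by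
    rcases le_or_gt 1 (4 * π * ℓ * κ) with h1 | h1
    · linarith [Real.neg_one_le_sin (4 * π * ℓ * κ)]
    · have hs := Real.sin_nonneg_of_nonneg_of_le_pi hy (by nlinarith)
      linarith
  have h2πℓ : (0:ℝ) < 2 * π * ℓ := by positivity
  have hδ : κ - Real.sin (4 * π * ℓ * κ) / (2 * π * ℓ) ≤ 3 * κ := by
    have : -(2 * κ) ≤ Real.sin (4 * π * ℓ * κ) / (2 * π * ℓ) := by
      rw [le_div_iff₀ h2πℓ]
      nlinarith
    linarith
  rcases le_or_gt (κ - Real.sin (4 * π * ℓ * κ) / (2 * π * ℓ)) 0 with hneg | hpos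
  · have := mul_nonpos_of_nonneg_of_nonpos hK.le hneg
    nlinarith
  · have h1 : Kc p κ ℓ * (κ - Real.sin (4 * π * ℓ * κ) / (2 * π * ℓ)) <
        p / (4 * κ) * (κ - Real.sin (4 * π * ℓ * κ) / (2 * π * ℓ)) :=
      mul_lt_mul_of_pos_right h hpos
    have hpκ : 0 < p / (4 * κ) := by positivity
    have h2 : p / (4 * κ) * (κ - Real.sin (4 * π * ℓ * κ) / (2 * π * ℓ)) ≤
        p / (4 * κ) * (3 * κ) := mul_le_mul_of_nonneg_left hδ hpκ.le
    have h3 : p / (4 * κ) * (3 * κ) = 3 / 4 * p := by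
      field_simp
    nlinarith
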